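/- arXiv:1002.0046 — 2 statements merged into one kernel-verified Lean document; each statement's English description precedes it below -/
import Mathlib

section
/- Let L(z) be a generating function with nonnegative coefficients such that L(z) = h(z)/(1 − z/ρ) near its unique dominant simple pole ρ > 0, where h is analytic and nonvanishing at ρ, and suppose ρ = ρ(w) depends smoothly on a positive weight parameter w with ∂ρ/∂w ≠ 0. Then the expectation E_{z,w}(N_a) = w·(∂_w L)(z)/L(z) satisfies E_{z,w}(N_a) ~ −w·n·(∂ρ/∂w)/ρ as z = ρ(1 − 1/n) and n → ∞. -/
open Filter Asymptotics Topology

/-- Asymptotic tuning at an algebraic (simple-pole) singularity: if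
`L(z,w) = h(z,w)/(1 - z/ρ(w))` with `h` smooth and nonvanishing at `(ρ(w₀), w₀)` and
`ρ` smooth with `ρ'(w₀) ≠ 0`, then the expected letter count
`E_{z,w}(N_a) = w ∂_w L(z,w) / L(z,w)`, evaluated at `z = ρ(w₀)(1 - 1/n)`, satisfies
`E_{z,w₀}(N_a) ~ -w₀ n ρ'(w₀)/ρ(w₀)` as `n → ∞`. -/
theorem stmt_14 (L h : ℝ → ℝ → ℝ) (ρ : ℝ → ℝ) (w₀ : ℝ) (hw₀ : 0 < w₀)
    (hρC : ContDiff ℝ 1 ρ) (hρpos : 0 < ρ w₀) (hρ' : deriv ρ w₀ ≠ 0)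
    (hhC : ContDiff ℝ 1 (fun p : ℝ × ℝ => h p.1 p.2))
    (hh0 : h (ρ w₀) w₀ ≠ 0)
    (hL : ∀ z w : ℝ, L z w = h z w / (1 - z / ρ w)) :
    (fun n : ℕ => w₀ * deriv (fun w => L (ρ w₀ * (1 - 1 / (n : ℝ))) w) w₀ /
        L (ρ w₀ * (1 - 1 / (n : ℝ))) w₀)
      ~[atTop] fun n : ℕ => -w₀ * (n : ℝ) * deriv ρ w₀ / ρ w₀ := by
  have hcne : ρ w₀ ≠ 0 := ne_of_gt hρpos
  have hw₀ne : w₀ ≠ 0 := ne_of_gt hw₀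
  set c := ρ w₀ with hc
  set r := deriv ρ w₀ with hrdef
  set H2 : ℝ × ℝ → ℝ := fun p => h p.1 p.2 with hH2
  have hρd : HasDerivAt ρ r w₀ := ((hρC.differentiable one_ne_zero) w₀).hasDerivAt
  -- partial derivative in w
  have hderivh : ∀ a : ℝ, HasDerivAt (fun w => h a w) (fderiv ℝ H2 (a, w₀) (0, 1)) w₀ := by
    intro a
    have h1 : HasFDerivAt H2 (fderiv ℝ H2 (a, w₀)) (a, w₀) :=
      (hhC.differentiable one_ne_zero (a, w₀)).hasFDerivAt
    have h2 : HasDerivAt (fun w : ℝ => ((a : ℝ), w)) (((0 : ℝ), (1 : ℝ))) w₀ :=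
      (hasDerivAt_const w₀ a).prodMk (hasDerivAt_id w₀)
    exact h1.comp_hasDerivAt w₀ h2
  set Hw : ℕ → ℝ := fun n => fderiv ℝ H2 (c * (1 - 1 / (n : ℝ)), w₀) (0, 1) with hHwdef
  set H : ℕ → ℝ := fun n => h (c * (1 - 1 / (n : ℝ))) w₀ with hHdef
  -- limits
  have hzlim : Tendsto (fun n : ℕ => c * (1 - 1 / (n : ℝ))) atTop (𝓝 c) := by
    have h1 : Tendsto (fun n : ℕ => 1 - 1 / (n : ℝ)) atTop (𝓝 1) := by
      have := tendsto_one_div_atTop_nhds_zero_nat (𝕜 := ℝ)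
      simpa using tendsto_const_nhds.sub this
    simpa using tendsto_const_nhds.mul h1
  have hplim : Tendsto (fun n : ℕ => (c * (1 - 1 / (n : ℝ)), w₀)) atTop (𝓝 (c, w₀)) :=
    hzlim.prodMk_nhds tendsto_const_nhds
  have hHlim : Tendsto H atTop (𝓝 (h c w₀)) := by
    have := (hhC.continuous.tendsto (c, w₀)).comp hplim
    exact this
  have hHwlim : Tendsto Hw atTop (𝓝 (fderiv ℝ H2 (c, w₀) (0, 1))) := by
    have hfc : Continuous (fun p => fderiv ℝ H2 p) := hhC.continuous_fderiv one_ne_zero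
    have h2 : Tendsto (fun n : ℕ => fderiv ℝ H2 (c * (1 - 1 / (n : ℝ)), w₀)) atTop
        (𝓝 (fderiv ℝ H2 (c, w₀))) := (hfc.tendsto _).comp hplim
    have h3 : Continuous fun f : (ℝ × ℝ) →L[ℝ] ℝ => f ((0 : ℝ), (1 : ℝ)) :=
      isBoundedBilinearMap_apply.continuous.comp (continuous_id.prodMk continuous_const)
    exact (h3.tendsto _).comp h2
  have hHne : ∀ᶠ n : ℕ in atTop, H n ≠ 0 := hHlim.eventually_ne hh0
  -- eventual formula for the ratio
  have E1 : ∀ᶠ n : ℕ in atTop,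
      (w₀ * deriv (fun w => L (c * (1 - 1 / (n : ℝ))) w) w₀ /
          L (c * (1 - 1 / (n : ℝ))) w₀) / (-w₀ * (n : ℝ) * r / c) =
        -(c * Hw n) / (r * H n) * (1 / (n : ℝ)) + (1 - 1 / (n : ℝ)) := by
    filter_upwards [hHne, eventually_ge_atTop 1] with n hHn hn1
    have hn0 : (n : ℝ) ≠ 0 := Nat.cast_ne_zero.mpr (by omega)
    set zn : ℝ := c * (1 - 1 / (n : ℝ)) with hzn
    have hden : 1 - zn / c = 1 / (n : ℝ) := by
      rw [hzn]
      field_simp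
      ring
    have hdenne : 1 - zn / c ≠ 0 := by rw [hden]; positivity
    -- derivative of the denominator in w
    have hGd : HasDerivAt (fun w => 1 - zn / ρ w)
        (-((0 * c - zn * r) / c ^ 2)) w₀ :=
      HasDerivAt.const_sub 1 ((hasDerivAt_const w₀ zn).div hρd hcne)
    have hLfun : (fun w => L zn w) = fun w => h zn w / (1 - zn / ρ w) :=
      funext fun w => hL zn w
    have hLd : HasDerivAt (fun w => L zn w)
        ((Hw n * (1 - zn / c) - H n * (-((0 * c - zn * r) / c ^ 2))) / (1 - zn / c) ^ 2) w₀ := by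
      rw [hLfun]
      exact (hderivh zn).div hGd hdenne
    rw [hLd.deriv, hL zn w₀]
    rw [show h zn w₀ = H n from rfl, hden]
    rw [hzn]
    field_simp
    ring
  -- the limit of the explicit formula
  have T : Tendsto (fun n : ℕ => -(c * Hw n) / (r * H n) * (1 / (n : ℝ)) + (1 - 1 / (n : ℝ)))
      atTop (𝓝 1) := by
    have h1 : Tendsto (fun n : ℕ => -(c * Hw n) / (r * H n)) atTop
        (𝓝 (-(c * fderiv ℝ H2 (c, w₀) (0, 1)) / (r * h c w₀))) := by
      exact ((tendsto_const_nhds.mul hHwlim).neg).div (tendsto_const_nhds.mul hHlim)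
        (mul_ne_zero hρ' hh0)
    have h2 : Tendsto (fun n : ℕ => 1 / (n : ℝ)) atTop (𝓝 0) :=
      tendsto_one_div_atTop_nhds_zero_nat
    have h4 : Tendsto (fun n : ℕ => (1 : ℝ) - 1 / (n : ℝ)) atTop (𝓝 (1 - 0)) :=
      tendsto_const_nhds.sub h2
    have h3 := (h1.mul h2).add h4
    simpa using h3
  rw [Asymptotics.isEquivalent_iff_tendsto_one]
  · exact T.congr' (E1.mono fun n hn => hn.symm)
  · filter_upwards [eventually_ge_atTop 1] with n hn1
    have hn0 : (n : ℝ) ≠ 0 := Nat.cast_ne_zero.mpr (by omega)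
    intro hcontra
    have := div_eq_zero_iff.mp hcontra
    rcases this with h | h
    · rcases mul_eq_zero.mp h with h' | h'
      · rcases mul_eq_zero.mp h' with h'' | h''
        · exact hw₀ne (by linarith [neg_eq_zero.mp h''])
        · exact hn0 h''
      · exact hρ' h'
    · exact hcne h
end

section
/- In any Tetris tessellation of a w×h rectangle by tetraminoes, the dependency graph D — whose vertices are the pieces and whose arcs go from a piece resting on top of another (at each contact between a southward face of one piece and a northward face of another) — is acyclic; consequently the pieces admit a topological order, i.e., a linear order in which every piece appears after all pieces it rests upon. -/
/-- Two grid cells are edge-adjacent. -/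
def CellAdj (a b : ℤ × ℤ) : Prop :=
  (a.1 = b.1 ∧ (a.2 = b.2 + 1 ∨ b.2 = a.2 + 1)) ∨
  (a.2 = b.2 ∧ (a.1 = b.1 + 1 ∨ b.1 = a.1 + 1))

/-- A finite set of cells is (edge-)connected. -/
def CellsConnected (s : Finset (ℤ × ℤ)) : Prop :=
  ∀ c ∈ s, ∀ d ∈ s,
    Relation.ReflTransGen (fun a b => a ∈ s ∧ b ∈ s ∧ CellAdj a b) c d

/-- A tetromino is a connected set of exactly 4 cells. -/
def IsTetromino (s : Finset (ℤ × ℤ)) : Prop := s.card = 4 ∧ CellsConnected s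

/-- The `w × h` board. -/
noncomputable def Board (w h : ℕ) : Finset (ℤ × ℤ) :=
  (Finset.Ico (0 : ℤ) w) ×ˢ (Finset.Ico (0 : ℤ) h)

/-- A Tetris tessellation of the `w × h` board: a family of pairwise disjoint
tetrominoes covering the board. -/
def IsTessellation (w h : ℕ) (T : Finset (Finset (ℤ × ℤ))) : Prop :=
  (∀ P ∈ T, IsTetromino P) ∧
  (∀ P ∈ T, ∀ Q ∈ T, P ≠ Q → Disjoint P Q) ∧
  T.sup id = Board w h

/-- The dependency relation: `P` rests on `Q` at a dependency point, i.e. some cell of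
`P` lies directly above a cell of `Q`. -/
def Dep (P Q : Finset (ℤ × ℤ)) : Prop :=
  P ≠ Q ∧ ∃ c : ℤ × ℤ, c ∈ Q ∧ (c.1, c.2 + 1) ∈ P

lemma adj_cases' {u1 u2 v1 v2 : ℤ} (h : CellAdj (u1,u2) (v1,v2)) :
    (v1 = u1+1 ∧ v2 = u2) ∨ (v1 = u1-1 ∧ v2 = u2) ∨
    (v1 = u1 ∧ v2 = u2+1) ∨ (v1 = u1 ∧ v2 = u2-1) := by
  rcases h with ⟨h1, h2 | h2⟩ | ⟨h1, h2 | h2⟩ <;> simp_all <;> omega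

lemma chain_memP {P : Finset (ℤ × ℤ)} :
    ∀ {l : List (ℤ×ℤ)} {a : ℤ×ℤ},
      List.Chain (fun x y => x ∈ P ∧ y ∈ P ∧ CellAdj x y) a l → ∀ x ∈ l, x ∈ P := by
  intro l
  induction l with
  | nil => intro a _ x hx; simp at hx
  | cons c t ih =>
    intro a h x hx
    simp only [List.Chain, List.chain_cons] at h
    rcases List.mem_cons.mp hx with rfl | hx
    · exact h.1.2.1
    · exact ih h.2 x hx

theorem chain_dedup {α : Type*} [DecidableEq α] (r : α → α → Prop) :
    ∀ (n : ℕ) (l : List α) (a b : α), l.length ≤ n → List.Chain r a l →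
      (a :: l).getLast? = some b →
      ∃ l', List.Chain r a l' ∧ (a :: l').getLast? = some b ∧
        (a :: l').Nodup ∧ ∀ x ∈ l', x ∈ l := by
  intro n
  induction n with
  | zero =>
    intro l a b hl hc hlast
    have : l = [] := List.length_eq_zero_iff.mp (Nat.le_zero.mp hl)
    subst this
    exact ⟨[], List.Chain.nil, hlast, List.nodup_singleton a, by simp⟩
  | succ n ih =>
    intro l a b hl hc hlast
    by_cases hmem : a ∈ l
    · obtain ⟨l1, l2, rfl⟩ := List.append_of_mem hmem
      have hc2 : List.Chain r a l2 := (List.isChain_cons_split (R := r)).mp hc |>.2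
      have hlast2 : (a :: l2).getLast? = some b := by
        rw [show a :: (l1 ++ a :: l2) = (a :: l1) ++ (a :: l2) by simp,
          List.getLast?_append] at hlast
        simpa using hlast
      have hlen : l2.length ≤ n := by simp at hl; omega
      obtain ⟨l', h1, h2, h3, h4⟩ := ih l2 a b hlen hc2 hlast2
      exact ⟨l', h1, h2, h3, fun x hx => by simp [h4 x hx]⟩
    · cases l with
      | nil => exact ⟨[], List.Chain.nil, hlast, List.nodup_singleton a, by simp⟩
      | cons c t =>
        simp only [List.Chain, List.chain_cons] at hc
        have hlast2 : (c :: t).getLast? = some b := by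
          rwa [List.getLast?_cons_cons] at hlast
        obtain ⟨l', h1, h2, h3, h4⟩ := ih t c b (by simp at hl; omega) hc.2 hlast2
        refine ⟨c :: l', List.chain_cons.mpr ⟨hc.1, h1⟩, ?_, ?_, ?_⟩
        · rwa [List.getLast?_cons_cons]
        · refine List.nodup_cons.mpr ⟨?_, h3⟩
          intro hx
          rcases List.mem_cons.mp hx with h | h
          · exact hmem (h ▸ (List.mem_cons_self : c ∈ c :: t))
          · exact hmem (List.mem_cons_of_mem c (h4 _ h))
        · intro x hx
          rcases List.mem_cons.mp hx with h | h
          · exact h ▸ (List.mem_cons_self : c ∈ c :: t)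
          · exact List.mem_cons_of_mem c (h4 _ h)

theorem step_lemma (P : Finset (ℤ×ℤ)) (hP : IsTetromino P)
    {a b : ℤ×ℤ} (ha : a ∈ P) (hb : b ∈ P)
    (ha' : (a.1, a.2+1) ∉ P) (hb' : (b.1, b.2-1) ∉ P) (hy : a.2 < b.2) :
    ∃ s : ℤ, (s = 1 ∨ s = -1) ∧ b = (a.1 + 2*s, a.2+1) ∧ (a.1+s, a.2+1) ∈ P := by
  obtain ⟨hcard, hconn⟩ := hP
  obtain ⟨l0, hc0, hlast0⟩ := List.exists_isChain_cons_of_relationReflTransGen (hconn a ha b hb)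
  obtain ⟨l, hc, hlast, hnd, -⟩ := chain_dedup _ l0.length l0 a b le_rfl hc0
    (by rw [List.getLast?_eq_getLast (List.cons_ne_nil _ _)]; exact congrArg some hlast0)
  have hmem : ∀ x ∈ l, x ∈ P := chain_memP hc
  have hlen : (a :: l).length ≤ 4 := by
    have hsub : (a :: l).toFinset ⊆ P := by
      intro x hx
      rcases List.mem_cons.mp (List.mem_toFinset.mp hx) with rfl | hx
      · exact ha
      · exact hmem x hx
    have := Finset.card_le_card hsub
    rwa [List.toFinset_card_of_nodup hnd, hcard] at this
  obtain ⟨a1, a2⟩ := a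
  obtain ⟨b1, b2⟩ := b
  simp only at ha' hb' hy ⊢
  match l, hc, hlast, hnd, hmem, hlen with
  | [], _, hlast, _, _, _ =>
    have e : a1 = b1 ∧ a2 = b2 := by simpa using hlast
    omega
  | [u], hc, hlast, hnd, hmem, _ =>
    obtain ⟨u1, u2⟩ := u
    have e : u1 = b1 ∧ u2 = b2 := by simpa using hlast
    obtain ⟨e1, e2⟩ := e
    simp only [List.Chain, List.chain_cons] at hc
    have huP : ((u1:ℤ),u2) ∈ P := hmem _ (by simp)
    rcases adj_cases' hc.1.2.2 with ⟨h1,h2⟩|⟨h1,h2⟩|⟨h1,h2⟩|⟨h1,h2⟩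
    · omega
    · omega
    · exact absurd (show ((a1:ℤ), a2+1) ∈ P by
        rw [show ((a1:ℤ),a2+1) = (u1,u2) by rw [Prod.mk.injEq]; omega]; exact huP) ha'
    · omega
  | [u, v], hc, hlast, hnd, hmem, _ =>
    obtain ⟨u1, u2⟩ := u
    obtain ⟨v1, v2⟩ := v
    have e : v1 = b1 ∧ v2 = b2 := by simpa using hlast
    obtain ⟨e1, e2⟩ := e
    simp only [List.Chain, List.chain_cons] at hc
    have huP : ((u1:ℤ),u2) ∈ P := hmem _ (by simp)
    rcases adj_cases' hc.1.2.2 with ⟨h1,h2⟩|⟨h1,h2⟩|⟨h1,h2⟩|⟨h1,h2⟩ <;>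
      rcases adj_cases' hc.2.1.2.2 with ⟨g1,g2⟩|⟨g1,g2⟩|⟨g1,g2⟩|⟨g1,g2⟩ <;>
      first
      | omega
      | (exact absurd (show ((a1:ℤ), a2+1) ∈ P by
          rw [show ((a1:ℤ),a2+1) = (u1,u2) by rw [Prod.mk.injEq]; omega]; exact huP) ha')
      | (exact absurd (show ((b1:ℤ), b2-1) ∈ P by
          rw [show ((b1:ℤ),b2-1) = (u1,u2) by rw [Prod.mk.injEq]; omega]; exact huP) hb')
  | [u, v, w], hc, hlast, hnd, hmem, _ =>
    obtain ⟨u1, u2⟩ := u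
    obtain ⟨v1, v2⟩ := v
    obtain ⟨w1, w2⟩ := w
    have e : w1 = b1 ∧ w2 = b2 := by simpa using hlast
    obtain ⟨e1, e2⟩ := e
    simp only [List.Chain, List.chain_cons] at hc
    have huP : ((u1:ℤ),u2) ∈ P := hmem _ (by simp)
    have hvP : ((v1:ℤ),v2) ∈ P := hmem _ (by simp)
    have hav : ¬((v1:ℤ) = a1 ∧ (v2:ℤ) = a2) := by
      rintro ⟨e1, e2⟩
      subst e1; subst e2
      simp at hnd
    rcases adj_cases' hc.1.2.2 with ⟨h1,h2⟩|⟨h1,h2⟩|⟨h1,h2⟩|⟨h1,h2⟩ <;>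
      [skip; skip;
        (exact absurd (show ((a1:ℤ), a2+1) ∈ P by
          rw [show ((a1:ℤ),a2+1) = (u1,u2) by rw [Prod.mk.injEq]; omega]; exact huP) ha');
        skip] <;>
      rcases adj_cases' hc.2.1.2.2 with ⟨g1,g2⟩|⟨g1,g2⟩|⟨g1,g2⟩|⟨g1,g2⟩ <;>
      rcases adj_cases' hc.2.2.1.2.2 with ⟨f1,f2⟩|⟨f1,f2⟩|⟨f1,f2⟩|⟨f1,f2⟩ <;>
      first
      | omega
      | (exact absurd (show ((b1:ℤ), b2-1) ∈ P by
          rw [show ((b1:ℤ),b2-1) = (v1,v2) by rw [Prod.mk.injEq]; omega]; exact hvP) hb')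
      | (exact absurd (show ((a1:ℤ), a2+1) ∈ P by
          rw [show ((a1:ℤ),a2+1) = (b1,b2) by rw [Prod.mk.injEq]; omega]; exact hb) ha')
      | (exact absurd ⟨by omega, by omega⟩ hav)
      | (refine ⟨1, Or.inl rfl, ?_, ?_⟩
         · rw [Prod.mk.injEq]; constructor <;> omega
         · rw [show ((a1:ℤ)+1,a2+1) = (v1,v2) by rw [Prod.mk.injEq]; constructor <;> omega]
           exact hvP)
      | (refine ⟨-1, Or.inr rfl, ?_, ?_⟩
         · rw [Prod.mk.injEq]; constructor <;> omega
         · rw [show ((a1:ℤ)+(-1),a2+1) = (v1,v2) by rw [Prod.mk.injEq]; constructor <;> omega]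
           exact hvP)
  | _ :: _ :: _ :: _ :: _, _, _, _, _, hlen => simp at hlen; omega


theorem cycle_of_transGen {α : Type*} {r : α → α → Prop} {P : α}
    (h : Relation.TransGen r P P) :
    ∃ (n : ℕ) (f : ℕ → α), 0 < n ∧ (∀ i, r (f i) (f (i+1))) ∧ (∀ i, f (i+n) = f i) := by
  obtain ⟨Q, hPQ, hQP⟩ := Relation.TransGen.head'_iff.mp h
  obtain ⟨l, hc, hlast⟩ := List.exists_isChain_cons_of_relationReflTransGen hQP
  set g : List α := P :: Q :: l with hg
  have hcg : List.Chain' r g := List.chain_cons.mpr ⟨hPQ, hc⟩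
  set n : ℕ := (Q :: l).length with hn
  have hng : g.length = n + 1 := by simp [hg, hn]
  have hnpos : 0 < n := by simp [hn]
  have key : ∀ k, k < n → r (g.getD k P) (g.getD (k+1) P) := by
    intro k hk
    have h2 := List.isChain_iff_getElem.mp hcg k (by rw [hng]; omega)
    have e1 : g.getD k P = g.get ⟨k, by rw [hng]; omega⟩ := by
      rw [List.getD_eq_getElem?_getD, List.getElem?_eq_getElem (by rw [hng]; omega)]
      rfl
    have e2 : g.getD (k+1) P = g.get ⟨k+1, by rw [hng]; omega⟩ := by
      rw [List.getD_eq_getElem?_getD, List.getElem?_eq_getElem (by rw [hng]; omega)]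
      rfl
    rw [e1, e2]
    exact h2
  have hgl : g.getD n P = P := by
    have h1 : g.getLast? = some P := by
      rw [hg, List.getLast?_cons_cons, List.getLast?_eq_getLast (List.cons_ne_nil _ _)]
      exact congrArg some hlast
    rw [List.getLast?_eq_getElem?, hng] at h1
    simp only [Nat.add_sub_cancel] at h1
    rw [List.getD_eq_getElem?_getD, h1]
    rfl
  have hg0 : g.getD 0 P = P := rfl
  refine ⟨n, fun i => g.getD (i % n) P, hnpos, ?_, ?_⟩
  · intro i
    show r (g.getD (i % n) P) (g.getD ((i+1) % n) P)
    have hmod : i % n < n := Nat.mod_lt i hnpos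
    have hm1 : (i+1) % n = (i % n + 1) % n := by
      conv_lhs => rw [← Nat.div_add_mod i n]
      rw [Nat.add_assoc, Nat.mul_add_mod]
    by_cases hcase : i % n + 1 = n
    · have h0 : (i+1) % n = 0 := by rw [hm1, hcase, Nat.mod_self]
      have h2 : g.getD n P = g.getD (i % n + 1) P := by rw [hcase]
      rw [h0, show g.getD 0 P = g.getD (i % n + 1) P from hg0.trans (hgl.symm.trans h2)]
      exact key (i % n) hmod
    · have h1 : (i+1) % n = i % n + 1 := by rw [hm1, Nat.mod_eq_of_lt (by omega)]
      rw [h1]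
      exact key (i % n) hmod
  · intro i
    show g.getD ((i + n) % n) P = g.getD (i % n) P
    rw [Nat.add_mod_right]

private lemma pair_eq {p q : ℤ×ℤ} (h1 : p.1 = q.1) (h2 : p.2 = q.2) : p = q := by
  cases p; cases q; simp_all

theorem no_cycle (T : Finset (Finset (ℤ×ℤ)))
    (htet : ∀ P ∈ T, IsTetromino P)
    (hdisj : ∀ P ∈ T, ∀ Q ∈ T, P ≠ Q → Disjoint P Q)
    {n : ℕ} (hn : 0 < n) (f : ℕ → Finset (ℤ×ℤ))
    (hrelf : ∀ i, f i ∈ T ∧ f (i+1) ∈ T ∧ Dep (f i) (f (i+1)))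
    (hper : ∀ i, f (i + n) = f i)
    (htwo : 2 < n → ∀ j, f (j+2) ≠ f j) : False := by
  classical
  rcases Nat.lt_or_ge n 2 with hn1 | hn2
  · have hne : f 0 ≠ f (0+1) := ((hrelf 0).2.2).1
    have : n = 1 := by omega
    subst this
    exact hne (hper 0).symm
  have hmul : ∀ m k, f (m + n*k) = f m := by
    intro m k
    induction k with
    | zero => simp
    | succ k ih => rw [show m + n*(k+1) = (m + n*k) + n by ring, hper, ih]
  have fmod : ∀ i, f i = f (i % n) := by
    intro i
    conv_lhs => rw [← Nat.div_add_mod i n]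
    rw [show n * (i / n) + i % n = i % n + n * (i / n) by ring, hmul]
  have hneq : ∀ i, f i ≠ f (i+1) := fun i => ((hrelf i).2.2).1
  have hdisj' : ∀ i j, f i ≠ f j → Disjoint (f i) (f j) :=
    fun i j h => hdisj _ (hrelf i).1 _ (hrelf j).1 h
  have hdep : ∀ i, ∃ c : ℤ×ℤ, c ∈ f (i+1) ∧ (c.1, c.2+1) ∈ f i := fun i => ((hrelf i).2.2).2
  choose c hcmem hctop using hdep
  obtain ⟨b, hb1, hb2, hbmod⟩ : ∃ b : ℕ → ℤ×ℤ, (∀ i, b i ∈ f i) ∧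
      (∀ i, ((b i).1, (b i).2 - 1) ∈ f (i+1)) ∧ (∀ i, b i = b (i % n)) := by
    refine ⟨fun i => ((c (i%n)).1, (c (i%n)).2 + 1), ?_, ?_, ?_⟩
    · intro i
      have h1 := hctop (i % n)
      rw [← fmod i] at h1
      exact h1
    · intro i
      have h1 := hcmem (i % n)
      have h2 : f (i % n + 1) = f (i+1) := by
        have h3 : i % n + 1 + n * (i / n) = i + 1 := by
          have := Nat.div_add_mod i n
          omega
        rw [← h3, hmul]
      rw [h2] at h1
      simpa using h1
    · intro i
      simp only [Nat.mod_mod_of_dvd _ dvd_rfl]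
  obtain ⟨M, i0, hi0M, hMle, hminx⟩ : ∃ (M : ℤ) (i0 : ℕ), (b i0).2 = M ∧
      (∀ i, (b i).2 ≤ M) ∧ (∀ i, (b i).2 = M → (b i0).1 ≤ (b i).1) := by
    have hrne : (Finset.range n).Nonempty := ⟨0, Finset.mem_range.mpr hn⟩
    have hMne : ((Finset.range n).image (fun i : ℕ => (b i).2)).Nonempty := hrne.image _
    set M : ℤ := ((Finset.range n).image (fun i : ℕ => (b i).2)).max' hMne with hM
    have hMle : ∀ i, (b i).2 ≤ M := by
      intro i
      rw [hbmod i]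
      exact Finset.le_max' ((Finset.range n).image (fun i : ℕ => (b i).2)) _
        (Finset.mem_image_of_mem _ (Finset.mem_range.mpr (Nat.mod_lt i hn)))
    have hTne : ((Finset.range n).filter (fun i => (b i).2 = M)).Nonempty := by
      obtain ⟨i, hi, hieq⟩ := Finset.mem_image.mp (Finset.max'_mem ((Finset.range n).image (fun i : ℕ => (b i).2)) hMne)
      exact ⟨i, Finset.mem_filter.mpr ⟨hi, hieq⟩⟩
    obtain ⟨i0, hi0T, hi0min⟩ := Finset.exists_min_image _ (fun i => (b i).1) hTne
    refine ⟨M, i0, (Finset.mem_filter.mp hi0T).2, hMle, ?_⟩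
    intro i hi
    have h1 : i % n ∈ (Finset.range n).filter (fun i => (b i).2 = M) := Finset.mem_filter.mpr
      ⟨Finset.mem_range.mpr (Nat.mod_lt i hn), by rw [← hbmod i]; exact hi⟩
    have := hi0min _ h1
    rwa [← hbmod i] at this
  -- key step
  have key : ∀ j, 1 ≤ j → (b j).2 = M → ∃ s : ℤ, (s = 1 ∨ s = -1) ∧
      b (j-1) = ((b j).1 - 2*s, M) ∧ ((b j).1 - s, M) ∈ f j := by
    intro j hj hMj
    have hj1 : (j-1) + 1 = j := by omega
    have haf : ((b (j-1)).1, (b (j-1)).2 - 1) ∈ f j := by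
      have := hb2 (j-1); rwa [hj1] at this
    have hbf : b j ∈ f j := hb1 j
    have hbprev : b (j-1) ∈ f (j-1) := hb1 (j-1)
    have hfne : f (j-1) ≠ f j := by have := hneq (j-1); rwa [hj1] at this
    have ha' : (((b (j-1)).1, (b (j-1)).2 - 1).1, ((b (j-1)).1, (b (j-1)).2 - 1).2 + 1) ∉ f j := by
      have he : (((b (j-1)).1, (b (j-1)).2 - 1).1, ((b (j-1)).1, (b (j-1)).2 - 1).2 + 1)
          = b (j-1) := pair_eq rfl (by show (b (j-1)).2 - 1 + 1 = _; ring)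
      rw [he]
      exact Finset.disjoint_left.mp (hdisj' _ _ hfne) hbprev
    have hb' : ((b j).1, (b j).2 - 1) ∉ f j := by
      have h1 : ((b j).1, (b j).2 - 1) ∈ f (j+1) := hb2 j
      have h2 : f (j+1) ≠ f j := (hneq j).symm
      exact Finset.disjoint_left.mp (hdisj' _ _ h2) h1
    have hy : (((b (j-1)).1, (b (j-1)).2 - 1)).2 < (b j).2 := by
      show (b (j-1)).2 - 1 < (b j).2
      have := hMle (j-1)
      omega
    obtain ⟨s, hs, heq, hmem⟩ := step_lemma (f j) (htet _ (hrelf j).1) haf hbf ha' hb' hy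
    have h1 : (b j).1 = (b (j-1)).1 + 2*s := congrArg Prod.fst heq
    have h2 : (b j).2 = ((b (j-1)).2 - 1) + 1 := congrArg Prod.snd heq
    refine ⟨s, hs, pair_eq (by omega) (by omega), ?_⟩
    have he2 : ((b j).1 - s, M) = ((b (j-1)).1 + s, ((b (j-1)).2 - 1) + 1) :=
      pair_eq (by omega) (by omega)
    rw [he2]
    exact hmem
  -- split into n = 2 and n ≥ 3
  rcases Nat.lt_or_ge n 3 with hn3 | hn3
  · -- n = 2
    have hn2' : n = 2 := by omega
    subst hn2'
    have hbj0 : b (i0 + 4) = b i0 := by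
      rw [hbmod (i0+4), hbmod i0, show (i0+4) % 2 = i0 % 2 by omega]
    have hM0 : (b (i0+4)).2 = M := by rw [hbj0]; exact hi0M
    obtain ⟨s, hs, heq, hmem⟩ := key (i0+4) (by omega) hM0
    have hprev2 : (b (i0+4-1)).2 = M := congrArg Prod.snd heq
    have hprev1 : (b (i0+4-1)).1 = (b (i0+4)).1 - 2*s := congrArg Prod.fst heq
    have hsneg : s = -1 := by
      have h1 := hminx (i0+4-1) hprev2
      have h2 : (b (i0+4)).1 = (b i0).1 := congrArg Prod.fst hbj0
      rcases hs with rfl | rfl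
      · omega
      · rfl
    subst hsneg
    obtain ⟨s', hs', heq', hmem'⟩ := key (i0+4-1) (by omega) hprev2
    have hb02 : b (i0+4-1-1) = b (i0+4) := by
      rw [hbmod (i0+4-1-1), hbmod (i0+4), show (i0+4-1-1) % 2 = (i0+4) % 2 by omega]
    have hq1 : (b (i0+4-1-1)).1 = (b (i0+4-1)).1 - 2*s' := congrArg Prod.fst heq'
    have hspos : s' = 1 := by
      have h2 : (b (i0+4-1-1)).1 = (b (i0+4)).1 := congrArg Prod.fst hb02
      rcases hs' with rfl | rfl
      · rfl
      · omega
    subst hspos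
    have hcell : ((b (i0+4)).1 + 1, M) ∈ f (i0+4) := by
      have he : ((b (i0+4)).1 - (-1), M) = ((b (i0+4)).1 + 1, M) := pair_eq (by omega) rfl
      rwa [he] at hmem
    have hcell' : ((b (i0+4)).1 + 1, M) ∈ f (i0+4-1) := by
      have he : ((b (i0+4-1)).1 - 1, M) = ((b (i0+4)).1 + 1, M) := pair_eq (by omega) rfl
      rwa [he] at hmem'
    have hfne : f (i0+4-1) ≠ f (i0+4) := by
      have := hneq (i0+4-1)
      rwa [show (i0+4-1)+1 = i0+4 by omega] at this
    exact Finset.disjoint_left.mp (hdisj' _ _ hfne) hcell' hcell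
  · -- n ≥ 3
    have h3n : 3 * n ≤ n * n := Nat.mul_le_mul_right n hn3
    have hbj0 : b (i0 + n*n) = b i0 := by
      rw [hbmod (i0 + n*n), hbmod i0]
      congr 1
      exact Nat.add_mul_mod_self_left i0 n n
    have claim : ∀ k, k ≤ n → b (i0 + n*n - k) = ((b i0).1 + 2*(k:ℤ), M) := by
      intro k
      induction k using Nat.strong_induction_on with
      | _ k IH =>
        intro hk
        cases k with
        | zero =>
          simp only [Nat.sub_zero, Nat.cast_zero, mul_zero, add_zero]
          rw [hbj0]
          exact pair_eq rfl hi0M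
        | succ k =>
          have hIHk : b (i0 + n*n - k) = ((b i0).1 + 2*(k:ℤ), M) := IH k (by omega) (by omega)
          have hj1 : 1 ≤ i0 + n*n - k := by omega
          have hbj2 : (b (i0 + n*n - k)).2 = M := by rw [hIHk]
          obtain ⟨s, hs, heq, hmem⟩ := key (i0 + n*n - k) hj1 hbj2
          have hfst : (b (i0 + n*n - k)).1 = (b i0).1 + 2*(k:ℤ) := congrArg Prod.fst hIHk
          have hidx : i0 + n*n - k - 1 = i0 + n*n - (k+1) := by omega
          have hp1 : (b (i0 + n*n - k - 1)).1 = (b (i0 + n*n - k)).1 - 2*s :=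
            congrArg Prod.fst heq
          have hp2 : (b (i0 + n*n - k - 1)).2 = M := congrArg Prod.snd heq
          rcases hs with rfl | rfl
          · -- west: contradiction
            rcases Nat.eq_zero_or_pos k with rfl | hkpos
            · have h := hminx (i0 + n*n - 0 - 1) hp2
              have h2 : (b (i0 + n*n - 0)).1 = (b i0).1 := by
                simpa using congrArg Prod.fst hbj0
              omega
            · have hIHk1 : b (i0 + n*n - (k-1)) = ((b i0).1 + 2*((k-1:ℕ):ℤ), M) :=
                IH (k-1) (by omega) (by omega)
              have hcast : ((k-1:ℕ):ℤ) = (k:ℤ) - 1 := by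
                have h1 : (1:ℕ) ≤ k := hkpos
                push_cast [h1]
                ring
              have hptr : b (i0 + n*n - k - 1) = b (i0 + n*n - (k-1)) := by
                rw [hIHk1, hcast]
                exact pair_eq (by omega) hp2
              have hj3 : (i0 + n*n - k - 1) + 2 = i0 + n*n - (k-1) := by omega
              have hne2 : f (i0 + n*n - (k-1)) ≠ f (i0 + n*n - k - 1) := by
                have := htwo (by omega) (i0 + n*n - k - 1)
                rwa [hj3] at this
              have hA : b (i0 + n*n - k - 1) ∈ f (i0 + n*n - k - 1) := hb1 _
              have hB : b (i0 + n*n - (k-1)) ∈ f (i0 + n*n - (k-1)) := hb1 _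
              have hA' : b (i0 + n*n - k - 1) ∈ f (i0 + n*n - (k-1)) := by
                rw [hptr]; exact hB
              exact absurd hA' (Finset.disjoint_left.mp (hdisj' _ _ hne2.symm) hA)
          · -- east
            rw [← hidx]
            refine pair_eq ?_ hp2
            show (b (i0 + n*n - k - 1)).1 = (b i0).1 + 2*((k:ℤ)+1)
            push_cast at hp1 hfst ⊢
            omega
    have hfinal := claim n le_rfl
    have hwrap : b (i0 + n*n - n) = b i0 := by
      rw [hbmod (i0 + n*n - n), hbmod i0]
      congr 1
      have hsplit : i0 + n*n - n = i0 + (n-1)*n := by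
        have h1 : (n-1)*n + n = n*n := by
          have h2 : (n-1+1) = n := Nat.sub_add_cancel (by omega)
          calc (n-1)*n + n = (n-1+1)*n := by ring
          _ = n*n := by rw [h2]
        omega
      rw [hsplit]
      exact Nat.add_mul_mod_self_right i0 (n-1) n
    rw [hwrap] at hfinal
    have hx := congrArg Prod.fst hfinal
    simp only at hx
    omega

/-- In any Tetris tessellation of a `w × h` rectangle, the dependency graph is
acyclic; consequently the pieces admit a topological order: every piece appears
after all pieces it rests upon. -/
theorem stmt_15 (w h : ℕ) (T : Finset (Finset (ℤ × ℤ))) (hT : IsTessellation w h T) :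
    (∀ P ∈ T, ¬ Relation.TransGen (fun P Q => P ∈ T ∧ Q ∈ T ∧ Dep P Q) P P) ∧
    ∃ ord : Finset (ℤ × ℤ) → ℕ,
      (Set.InjOn ord T) ∧
      ∀ P ∈ T, ∀ Q ∈ T, Dep P Q → ord Q < ord P := by
  obtain ⟨htet, hdisj, -⟩ := hT
  classical
  have acyc : ∀ P ∈ T, ¬ Relation.TransGen (fun P Q => P ∈ T ∧ Q ∈ T ∧ Dep P Q) P P := by
    intro P hP hcyc
    have hS : ∃ m : ℕ, 0 < m ∧ ∃ f : ℕ → Finset (ℤ×ℤ),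
        (∀ i, (f i ∈ T ∧ f (i+1) ∈ T ∧ Dep (f i) (f (i+1)))) ∧ (∀ i, f (i+m) = f i) := by
      obtain ⟨m, f, hm, h1, h2⟩ := cycle_of_transGen hcyc
      exact ⟨m, hm, f, h1, h2⟩
    obtain ⟨hnpos, f, hrelf, hper⟩ := Nat.find_spec hS
    refine no_cycle T htet hdisj hnpos f hrelf hper ?_
    intro hn3 j heq
    have h2S : 0 < 2 ∧ ∃ g : ℕ → Finset (ℤ×ℤ),
        (∀ i, (g i ∈ T ∧ g (i+1) ∈ T ∧ Dep (g i) (g (i+1)))) ∧ (∀ i, g (i+2) = g i) := by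
      refine ⟨by norm_num, fun i => f (j + i % 2), ?_, ?_⟩
      · intro i
        rcases Nat.mod_two_eq_zero_or_one i with h | h
        · have h1 : (i+1) % 2 = 1 := by omega
          simp only [h, h1, Nat.add_zero]
          exact hrelf j
        · have h1 : (i+1) % 2 = 0 := by omega
          simp only [h, h1, Nat.add_zero]
          have h3 := hrelf (j+1)
          rw [show j+1+1 = j+2 by omega, heq] at h3
          exact h3
      · intro i
        simp only [show (i+2) % 2 = i % 2 by omega]
    exact Nat.find_min hS hn3 h2S
  refine ⟨acyc, ?_⟩
  refine ⟨fun X => (T.filter (fun R =>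
      Relation.TransGen (fun P Q => P ∈ T ∧ Q ∈ T ∧ Dep P Q) X R)).card * (T.card + 1)
      + T.toList.idxOf X, ?_, ?_⟩
  · -- injectivity
    intro X hX Y hY hEq
    simp only [Finset.mem_coe] at hX hY
    have hXl : T.toList.idxOf X < T.card + 1 := by
      have := List.idxOf_lt_length_iff.mpr (Finset.mem_toList.mpr hX)
      rw [Finset.length_toList] at this
      omega
    have hYl : T.toList.idxOf Y < T.card + 1 := by
      have := List.idxOf_lt_length_iff.mpr (Finset.mem_toList.mpr hY)
      rw [Finset.length_toList] at this
      omega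
    have hEq2 : (T.filter (fun R =>
        Relation.TransGen (fun P Q => P ∈ T ∧ Q ∈ T ∧ Dep P Q) X R)).card * (T.card + 1)
        + T.toList.idxOf X = (T.filter (fun R =>
        Relation.TransGen (fun P Q => P ∈ T ∧ Q ∈ T ∧ Dep P Q) Y R)).card * (T.card + 1)
        + T.toList.idxOf Y := by simpa using hEq
    have e1 : ((T.filter (fun R =>
        Relation.TransGen (fun P Q => P ∈ T ∧ Q ∈ T ∧ Dep P Q) X R)).card * (T.card + 1)
        + T.toList.idxOf X) % (T.card + 1) = T.toList.idxOf X % (T.card + 1) := by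
      rw [Nat.mul_comm]
      exact Nat.mul_add_mod _ _ _
    have e2 : ((T.filter (fun R =>
        Relation.TransGen (fun P Q => P ∈ T ∧ Q ∈ T ∧ Dep P Q) Y R)).card * (T.card + 1)
        + T.toList.idxOf Y) % (T.card + 1) = T.toList.idxOf Y % (T.card + 1) := by
      rw [Nat.mul_comm]
      exact Nat.mul_add_mod _ _ _
    rw [hEq2, e2] at e1
    rw [Nat.mod_eq_of_lt hXl, Nat.mod_eq_of_lt hYl] at e1
    exact (List.idxOf_inj (Finset.mem_toList.mpr hX)).mp e1.symm
  · intro P hP Q hQ hdep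
    have hsub : T.filter (fun R =>
        Relation.TransGen (fun P Q => P ∈ T ∧ Q ∈ T ∧ Dep P Q) Q R) ⊂ T.filter (fun R =>
        Relation.TransGen (fun P Q => P ∈ T ∧ Q ∈ T ∧ Dep P Q) P R) := by
      rw [Finset.ssubset_iff_of_subset]
      · refine ⟨Q, ?_, ?_⟩
        · exact Finset.mem_filter.mpr ⟨hQ, Relation.TransGen.single ⟨hP, hQ, hdep⟩⟩
        · intro hmem
          exact acyc Q hQ (Finset.mem_filter.mp hmem).2
      · intro R hR
        have h1 := Finset.mem_filter.mp hR
        exact Finset.mem_filter.mpr ⟨h1.1, Relation.TransGen.head ⟨hP, hQ, hdep⟩ h1.2⟩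
    have hlt := Finset.card_lt_card hsub
    have hQl : T.toList.idxOf Q < T.card + 1 := by
      have := List.idxOf_lt_length_iff.mpr (Finset.mem_toList.mpr hQ)
      rw [Finset.length_toList] at this
      omega
    show (T.filter (fun R =>
        Relation.TransGen (fun P Q => P ∈ T ∧ Q ∈ T ∧ Dep P Q) Q R)).card * (T.card + 1)
        + T.toList.idxOf Q < (T.filter (fun R =>
        Relation.TransGen (fun P Q => P ∈ T ∧ Q ∈ T ∧ Dep P Q) P R)).card * (T.card + 1)
        + T.toList.idxOf P
    set cP := (T.filter (fun R =>
        Relation.TransGen (fun P Q => P ∈ T ∧ Q ∈ T ∧ Dep P Q) P R)).card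
    set cQ := (T.filter (fun R =>
        Relation.TransGen (fun P Q => P ∈ T ∧ Q ∈ T ∧ Dep P Q) Q R)).card
    have hmul : (cQ+1) * (T.card + 1) ≤ cP * (T.card + 1) :=
      Nat.mul_le_mul_right _ (by omega)
    have hds : (cQ+1)*(T.card + 1) = cQ*(T.card+1) + (T.card+1) := by ring
    omega
end
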